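/- For all nonnegative integers n, all y₁, y₂ ∈ ℂ, and positive integers w₁, w₂, w₃ with ξ^{d w₁ w₂ w₃} ≠ 1: Σ_{k+l+m=n} (n!/(k! l! m!)) B_{k,χ,ξ^{w₂w₃}}(w₁ y₁) B_{l,χ,ξ^{w₁w₃}}(w₂ y₂) S_m(d w₃ − 1; χ, ξ^{w₁w₂}) w₁^{l+m} w₂^{k+m} w₃^{k+l} = w₃^n Σ_{k=0}^{n} C(n,k) B_{k,χ,ξ^{w₂w₃}}(w₁ y₁) Σ_{a=0}^{d w₃ − 1} χ(a) ξ^{a w₁ w₂} B_{n−k,χ,ξ^{w₁w₃}}(w₂ y₂ + (w₂/w₃) a) w₁^{n−k} w₂^{k}. That is, the two evaluations (27) and (28) of the same p-adic integral quotient I(Λ₂₃¹) coincide coefficientwise. -/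

import Mathlib

open PowerSeries Finset

/-- `Σ_{a=0}^{d-1} χ(a) ζ^a e^{at}` as a formal power series in `ℂ⟦t⟧`. -/
noncomputable def twistSum (d : ℕ) (χ : DirichletCharacter ℂ d) (ζ : ℂ) : PowerSeries ℂ :=
  ∑ a ∈ Finset.range d,
    PowerSeries.C (χ (a : ZMod d) * ζ ^ a) * PowerSeries.rescale (a : ℂ) (PowerSeries.exp ℂ)

/-- Generalized twisted Bernoulli polynomial `B_{n,χ,ζ}(x)`, defined by
`(t e^{xt}/(ζ^d e^{dt} − 1)) Σ_{a=0}^{d−1} χ(a) ζ^a e^{at} = Σ_n B_{n,χ,ζ}(x) tⁿ/n!`. -/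
noncomputable def genBern (d : ℕ) (χ : DirichletCharacter ℂ d) (ζ : ℂ) (n : ℕ) (x : ℂ) : ℂ :=
  (n.factorial : ℂ) * PowerSeries.coeff n
    (PowerSeries.X * PowerSeries.rescale x (PowerSeries.exp ℂ) * twistSum d χ ζ *
      (PowerSeries.C (ζ ^ d) * PowerSeries.rescale (d : ℂ) (PowerSeries.exp ℂ) - 1)⁻¹)

/-- Generalized twisted power sum `S_k(m; χ, ζ) = Σ_{a=0}^{m} χ(a) ζ^a a^k` (with `0^0 = 1`). -/
noncomputable def genPowSum (d : ℕ) (χ : DirichletCharacter ℂ d) (ζ : ℂ) (k m : ℕ) : ℂ :=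
  ∑ a ∈ Finset.range (m + 1), χ (a : ZMod d) * ζ ^ a * (a : ℂ) ^ k

/-- The generating series of `genBern`. -/
noncomputable def Fser (d : ℕ) (χ : DirichletCharacter ℂ d) (ζ : ℂ) (x : ℂ) : PowerSeries ℂ :=
  PowerSeries.X * PowerSeries.rescale x (PowerSeries.exp ℂ) * twistSum d χ ζ *
    (PowerSeries.C (ζ ^ d) * PowerSeries.rescale (d : ℂ) (PowerSeries.exp ℂ) - 1)⁻¹

lemma genBern_eq (d : ℕ) (χ : DirichletCharacter ℂ d) (ζ : ℂ) (n : ℕ) (x : ℂ) :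
    genBern d χ ζ n x = (n.factorial : ℂ) * PowerSeries.coeff n (Fser d χ ζ x) := rfl

lemma Fser_add (d : ℕ) (χ : DirichletCharacter ℂ d) (ζ : ℂ) (x c : ℂ) :
    Fser d χ ζ (x + c) = Fser d χ ζ x * PowerSeries.rescale c (PowerSeries.exp ℂ) := by
  unfold Fser
  rw [← PowerSeries.exp_mul_exp_eq_exp_add]
  ring

/-- The twisted sum `Σ_{a<d w₃} χ(a) ξ^{a w₁ w₂} e^{(w₂/w₃) a t}` as a power series. -/
noncomputable def Hser (d : ℕ) (χ : DirichletCharacter ℂ d) (ξ : ℂ) (w₁ w₂ w₃ : ℕ) :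
    PowerSeries ℂ :=
  ∑ a ∈ Finset.range (d * w₃),
    PowerSeries.C (χ (a : ZMod d) * (ξ ^ (w₁ * w₂)) ^ a) *
      PowerSeries.rescale ((w₂ : ℂ) / (w₃ : ℂ) * (a : ℂ)) (PowerSeries.exp ℂ)

lemma coeff_Hser (d : ℕ) (χ : DirichletCharacter ℂ d) (ξ : ℂ) (w₁ w₂ w₃ : ℕ)
    (hpos : 0 < d * w₃) (m : ℕ) :
    PowerSeries.coeff m (Hser d χ ξ w₁ w₂ w₃)
      = ((w₂ : ℂ) / (w₃ : ℂ)) ^ m * ((m.factorial : ℂ))⁻¹ *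
        genPowSum d χ (ξ ^ (w₁ * w₂)) m (d * w₃ - 1) := by
  unfold Hser genPowSum
  rw [show d * w₃ - 1 + 1 = d * w₃ by omega, map_sum, Finset.mul_sum]
  refine Finset.sum_congr rfl fun a _ => ?_
  rw [PowerSeries.coeff_C_mul, PowerSeries.coeff_rescale, PowerSeries.coeff_exp, one_div,
    map_inv₀, map_natCast (algebraMap ℚ ℂ) m.factorial, mul_pow]
  ring

lemma key_sum (d : ℕ) (χ : DirichletCharacter ℂ d) (ξ : ℂ) (w₁ w₂ w₃ : ℕ) (y₂ : ℂ) (N : ℕ) :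
    (∑ a ∈ Finset.range (d * w₃), χ (a : ZMod d) * ξ ^ (a * (w₁ * w₂)) *
        genBern d χ (ξ ^ (w₁ * w₃)) N ((w₂ : ℂ) * y₂ + (w₂ : ℂ) / (w₃ : ℂ) * a))
      = (N.factorial : ℂ) * PowerSeries.coeff N
          (Fser d χ (ξ ^ (w₁ * w₃)) ((w₂ : ℂ) * y₂) * Hser d χ ξ w₁ w₂ w₃) := by
  have hprod : Fser d χ (ξ ^ (w₁ * w₃)) ((w₂ : ℂ) * y₂) * Hser d χ ξ w₁ w₂ w₃
      = ∑ a ∈ Finset.range (d * w₃),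
          PowerSeries.C (χ (a : ZMod d) * (ξ ^ (w₁ * w₂)) ^ a) *
            Fser d χ (ξ ^ (w₁ * w₃)) ((w₂ : ℂ) * y₂ + (w₂ : ℂ) / (w₃ : ℂ) * a) := by
    unfold Hser
    rw [Finset.mul_sum]
    refine Finset.sum_congr rfl fun a _ => ?_
    rw [Fser_add]
    ring
  rw [hprod, map_sum, Finset.mul_sum]
  refine Finset.sum_congr rfl fun a _ => ?_
  rw [PowerSeries.coeff_C_mul, genBern_eq,
    show ξ ^ (a * (w₁ * w₂)) = (ξ ^ (w₁ * w₂)) ^ a by rw [← pow_mul, mul_comm]]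
  ring

/-- the two evaluations (27) and (28) of `I(Λ₂₃¹)` coincide coefficientwise. -/
theorem stmt13 (d : ℕ) (hd : 0 < d) (χ : DirichletCharacter ℂ d) (hχ : χ.IsPrimitive)
    (ξ : ℂ) (hroot : ∃ m : ℕ, 0 < m ∧ ξ ^ m = 1)
    (n : ℕ) (w₁ w₂ w₃ : ℕ) (hw₁ : 0 < w₁) (hw₂ : 0 < w₂) (hw₃ : 0 < w₃)
    (h : ξ ^ (d * (w₁ * w₂ * w₃)) ≠ 1) (y₁ y₂ : ℂ) :
    ∑ k ∈ Finset.range (n + 1), ∑ l ∈ Finset.range (n + 1 - k),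
        (n.factorial : ℂ) / ((k.factorial : ℂ) * (l.factorial : ℂ) *
            ((n - k - l).factorial : ℂ)) *
          genBern d χ (ξ ^ (w₂ * w₃)) k (w₁ * y₁) *
          genBern d χ (ξ ^ (w₁ * w₃)) l (w₂ * y₂) *
          genPowSum d χ (ξ ^ (w₁ * w₂)) (n - k - l) (d * w₃ - 1) *
          (w₁ : ℂ) ^ (l + (n - k - l)) * (w₂ : ℂ) ^ (k + (n - k - l)) * (w₃ : ℂ) ^ (k + l)
      = (w₃ : ℂ) ^ n * ∑ k ∈ Finset.range (n + 1), (n.choose k : ℂ) *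
          genBern d χ (ξ ^ (w₂ * w₃)) k (w₁ * y₁) *
          (∑ a ∈ Finset.range (d * w₃), χ (a : ZMod d) * ξ ^ (a * (w₁ * w₂)) *
            genBern d χ (ξ ^ (w₁ * w₃)) (n - k)
              ((w₂ : ℂ) * y₂ + (w₂ : ℂ) / (w₃ : ℂ) * a)) *
          (w₁ : ℂ) ^ (n - k) * (w₂ : ℂ) ^ k := by
  have hw3c : (w₃ : ℂ) ≠ 0 := Nat.cast_ne_zero.mpr hw₃.ne'
  have hpos : 0 < d * w₃ := Nat.mul_pos hd hw₃
  symm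
  rw [Finset.mul_sum]
  refine Finset.sum_congr rfl fun k hk => ?_
  have hk' : k ≤ n := Nat.lt_succ_iff.mp (Finset.mem_range.mp hk)
  rw [key_sum d χ ξ w₁ w₂ w₃ y₂ (n - k), PowerSeries.coeff_mul,
    Finset.Nat.sum_antidiagonal_eq_sum_range_succ_mk,
    show n + 1 - k = n - k + 1 by omega]
  simp only [Finset.mul_sum, Finset.sum_mul]
  refine Finset.sum_congr rfl fun l hl => ?_
  have hl' : l ≤ n - k := Nat.lt_succ_iff.mp (Finset.mem_range.mp hl)
  rw [coeff_Hser d χ ξ w₁ w₂ w₃ hpos]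
  obtain ⟨m, hm⟩ : ∃ m, n = k + l + m := ⟨n - k - l, by omega⟩
  subst hm
  rw [show k + l + m - k - l = m by omega, show k + l + m - k = l + m by omega,
    genBern_eq d χ (ξ ^ (w₁ * w₃)) l]
  have hch := Nat.choose_mul_factorial_mul_factorial (show k ≤ k + l + m by omega)
  rw [show k + l + m - k = l + m by omega] at hch
  have hkf : (k.factorial : ℂ) ≠ 0 := Nat.cast_ne_zero.mpr k.factorial_ne_zero
  have hlf : (l.factorial : ℂ) ≠ 0 := Nat.cast_ne_zero.mpr l.factorial_ne_zero
  have hmf : (m.factorial : ℂ) ≠ 0 := Nat.cast_ne_zero.mpr m.factorial_ne_zero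
  have hlmf : ((l + m).factorial : ℂ) ≠ 0 := Nat.cast_ne_zero.mpr (l + m).factorial_ne_zero
  have hchc : (((k + l + m).choose k : ℕ) : ℂ)
      = (((k + l + m).factorial : ℕ) : ℂ) / ((k.factorial : ℂ) * ((l + m).factorial : ℂ)) := by
    rw [eq_div_iff (mul_ne_zero hkf hlmf)]
    have hc := congrArg (Nat.cast (R := ℂ)) hch
    push_cast at hc
    linear_combination hc
  rw [hchc]
  field_simp
  rw [div_pow]
  field_simp
  ring
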